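/- arXiv:1909.12735 — 2 statements merged into one kernel-verified Lean document; each statement's English description precedes it below -/
import Mathlib

section
/- Let A(y,∂) and B(y,∂) be pseudodifferential operators in the variable y, and let y' be a second variable with ∂' = d/dy'. Then Res_{z=0} dz ( A(y,∂)(e^{yz}) · B(y',∂')(e^{-y'z}) ), computed by Taylor-expanding B(y',∂')(e^{-y'z}) at y' = y, equals ( A(y,∂)·B^*(y,∂)·∂ ) applied to (y-y')^0, where for a pseudodifferential operator P = Σ_k p_k ∂^{-k} one defines P·(y-y')^0 := Σ_{k ≥ 0} p_k (y-y')^k / k!. -/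
namespace ExtendedDToda

/-- Generalized binomial coefficient `C(n, j)` for an integer `n`:
`C(n,j) = n(n-1)⋯(n-j+1)/j!`. -/
def zchoose (n : ℤ) (j : ℕ) : ℤ :=
  if 0 ≤ n then ((n.toNat).choose j : ℤ)
  else (-1) ^ j * ((((j : ℤ) - 1 - n).toNat).choose j : ℤ)

/-- Pseudodifferential operators over `R`: formal series `Σ_{i ≤ N} f_i ∂^i`,
recorded by the left coefficient function `i ↦ f_i`, with support bounded above. -/
structure PDO (R : Type) [CommRing R] : Type where
  coeff : ℤ → R
  bdd : ∃ N : ℤ, ∀ n : ℤ, N < n → coeff n = 0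

namespace PDO

variable {R : Type} [CommRing R] (d : Derivation ℤ R R)

/-- The constant operator `f·∂^0`. -/
def ofR (f : R) : PDO R :=
  ⟨fun n => if n = 0 then f else 0, ⟨0, fun n hn => if_neg (by omega)⟩⟩

/-- The operator `∂^k`, `k ∈ ℤ`. -/
def Dpow (k : ℤ) : PDO R :=
  ⟨fun n => if n = k then (1 : R) else 0, ⟨k, fun n hn => if_neg (by omega)⟩⟩

def add (P Q : PDO R) : PDO R where
  coeff n := P.coeff n + Q.coeff n
  bdd := by
    obtain ⟨N, hN⟩ := P.bdd
    obtain ⟨M, hM⟩ := Q.bdd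
    exact ⟨max N M, fun n hn => by
      beta_reduce
      rw [hN n ((le_max_left N M).trans_lt hn),
        hM n ((le_max_right N M).trans_lt hn), add_zero]⟩

def neg (P : PDO R) : PDO R where
  coeff n := -P.coeff n
  bdd := by
    obtain ⟨N, hN⟩ := P.bdd
    exact ⟨N, fun n hn => by beta_reduce; rw [hN n hn, neg_zero]⟩

def sub (P Q : PDO R) : PDO R := add P (neg Q)

/-- The product of pseudodifferential operators, determined by the relation
`∂^n·f = Σ_{j ≥ 0} C(n,j) ∂^j(f) ∂^{n-j}` (valid for all `n ∈ ℤ`). -/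
noncomputable def mul (P Q : PDO R) : PDO R where
  coeff n := ∑ᶠ p : ℤ × ℕ,
    P.coeff p.1 * (zchoose p.1 p.2 • (⇑d)^[p.2] (Q.coeff (n - p.1 + p.2)))
  bdd := by
    obtain ⟨N, hN⟩ := P.bdd
    obtain ⟨M, hM⟩ := Q.bdd
    refine ⟨N + M, fun n hn => ?_⟩
    have hz : (⇑d) (0 : R) = 0 := by simp
    have h : ∀ p : ℤ × ℕ,
        P.coeff p.1 * (zchoose p.1 p.2 • (⇑d)^[p.2] (Q.coeff (n - p.1 + p.2))) = 0 := by
      intro p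
      by_cases hp : p.1 ≤ N
      · rw [hM _ (by omega), Function.iterate_fixed hz p.2, smul_zero, mul_zero]
      · rw [hN _ (by omega), zero_mul]
    beta_reduce
    rw [finsum_congr h, finsum_zero]

/-- The formal adjoint `(Σ_i f_i ∂^i)^* = Σ_i (-∂)^i f_i`. -/
noncomputable def adj (P : PDO R) : PDO R where
  coeff n := ∑ᶠ j : ℕ,
    (((-1 : ℤˣ) ^ (n + (j : ℤ)) : ℤˣ) : ℤ) •
      (zchoose (n + (j : ℤ)) j • (⇑d)^[j] (P.coeff (n + (j : ℤ))))
  bdd := by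
    obtain ⟨N, hN⟩ := P.bdd
    refine ⟨N, fun n hn => ?_⟩
    have hz : (⇑d) (0 : R) = 0 := by simp
    have h : ∀ j : ℕ,
        (((-1 : ℤˣ) ^ (n + (j : ℤ)) : ℤˣ) : ℤ) •
          (zchoose (n + (j : ℤ)) j • (⇑d)^[j] (P.coeff (n + (j : ℤ)))) = 0 := by
      intro j
      rw [hN _ (by omega), Function.iterate_fixed hz j, smul_zero, smul_zero]
    beta_reduce
    rw [finsum_congr h, finsum_zero]

/-- The residue of a pseudodifferential operator: the coefficient of `∂^{-1}`. -/
def Res (P : PDO R) : R := P.coeff (-1)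

/-- Powers of a pseudodifferential operator. -/
noncomputable def npow (P : PDO R) : ℕ → PDO R
  | 0 => Dpow 0
  | (k + 1) => mul d P (npow P k)

end PDO
end ExtendedDToda

namespace ExtendedDToda
namespace PDO

variable {R : Type} [CommRing R]

/-- Coefficientwise derivative `P' = Σ_i ∂(p_i) ∂^i` of a pseudodifferential
operator. -/
def dC (d : Derivation ℤ R R) (P : PDO R) : PDO R :=
  ⟨fun n => d (P.coeff n), by
    obtain ⟨N, hN⟩ := P.bdd
    exact ⟨N, fun n hn => by beta_reduce; rw [hN n hn]; simp⟩⟩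

/-- The sequence `B_0 = B`, `B_{n+1} = B_n' + B_n·∂`, so that
`∂_y^n (B(y,∂)(e^{-yz})) = B_n(y,∂)(e^{-yz})`.  It arises when the second
factor `B(y',∂')(e^{-y'z})` is Taylor-expanded at `y' = y`. -/
noncomputable def Bseq (d : Derivation ℤ R R) (B : PDO R) : ℕ → PDO R
  | 0 => B
  | (k + 1) => add (dC d (Bseq d B k)) (mul d (Bseq d B k) (Dpow 1))

end PDO
end ExtendedDToda

/-!
By the Chu–Vandermonde identity, `Res (P·Q^*) = Σ_t (-1)^t P_{-1-t} Q_t` for any two operators: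
expanding the residue, the coefficient in front of `P_i ∂^s(Q_{s-1-i})` is
`Σ_{j+l=s} C(i,j) C(s-1-i,l) = C(s-1,s)`, which vanishes unless `s = 0`. Hence the `k`-th
coefficient on the left is `((-1)^k/k!) Res (A·B_k^*)`. From `B_{k+1} = B_k' + B_k·∂` and
`(B')^* = (B^*)'` one gets `B_{k+1}^* = -B_k^*·∂`, so `B_k^* = (-1)^k B^*·∂^k`, and
`Res (A·B^*·∂^k)` is the coefficient of `∂^{-k}` in `A·B^*·∂`.
-/

open Finset

namespace ExtendedDToda

theorem zchoose_eq_choose : zchoose = Ring.choose := by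
  funext n j
  unfold zchoose
  split_ifs with hn
  · lift n to ℕ using hn
    simp [Ring.choose_natCast]
  · have hneg : n = -(-n) := (neg_neg n).symm
    have hcast : ((((j : ℤ) - 1 - n).toNat : ℕ) : ℤ) = -n + j - 1 := by omega
    rw [hneg, Ring.choose_neg, neg_neg, ← hcast, Ring.choose_natCast, Units.smul_def,
      Int.coe_negOnePow_natCast, smul_eq_mul]

theorem sum_range_choose_mul_choose_sub_one (i : ℤ) (s : ℕ) :
    ∑ j ∈ range (s + 1), Ring.choose i j * Ring.choose ((s : ℤ) - 1 - i) (s - j) =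
      if s = 0 then 1 else 0 := by
  rw [← Nat.sum_antidiagonal_eq_sum_range_succ
      (fun a b => Ring.choose i a * Ring.choose ((s : ℤ) - 1 - i) b),
    ← Ring.add_choose_eq s (Commute.all _ _), add_sub_cancel]
  rcases s with _ | s
  · simp
  · rw [if_neg s.succ_ne_zero, Nat.cast_succ, add_sub_cancel_right, Ring.choose_natCast,
      Nat.choose_eq_zero_of_lt s.lt_succ_self, Nat.cast_zero]

namespace PDO

variable {R : Type} [CommRing R] (d : Derivation ℤ R R)

theorem iterate_derivation_sum {ι : Type} (s : Finset ι) (f : ι → R) (j : ℕ) :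
    (⇑d)^[j] (∑ i ∈ s, f i) = ∑ i ∈ s, (⇑d)^[j] (f i) := by
  rw [← Derivation.coeFn_coe, ← Module.End.coe_pow, map_sum]

theorem iterate_derivation_zsmul (j : ℕ) (c : ℤ) (x : R) :
    (⇑d)^[j] (c • x) = c • (⇑d)^[j] x := by
  rw [← Derivation.coeFn_coe, ← Module.End.coe_pow, map_zsmul]

theorem mul_coeff_eq_sum (P Q : PDO R) {NP NQ : ℤ} (hP : ∀ n, NP < n → P.coeff n = 0)
    (hQ : ∀ n, NQ < n → Q.coeff n = 0) (n : ℤ) {L : ℕ} (hL : NP + NQ - n < L) :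
    (mul d P Q).coeff n = ∑ i ∈ Icc (n - NQ) NP, ∑ j ∈ range L,
      P.coeff i * (zchoose i j • (⇑d)^[j] (Q.coeff (n - i + j))) := by
  rw [← sum_product']
  refine finsum_eq_sum_of_support_subset _ fun p hp => ?_
  obtain ⟨i, j⟩ := p
  have hi : i ≤ NP := by
    by_contra! h
    exact hp (by simp [hP i h])
  have hj : n - i + j ≤ NQ := by
    by_contra! h
    exact hp (by simp [hQ _ h, iterate_map_zero])
  simp only [coe_product, coe_Icc, coe_range, Set.mem_prod, Set.mem_Icc, Set.mem_Iio]
  omega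

theorem adj_coeff_eq_sum (Q : PDO R) {NQ : ℤ} (hQ : ∀ n, NQ < n → Q.coeff n = 0)
    (m : ℤ) {L : ℕ} (hL : NQ - m < L) :
    (adj d Q).coeff m = ∑ l ∈ range L, (((-1 : ℤˣ) ^ (m + l) : ℤˣ) : ℤ) •
      (zchoose (m + l) l • (⇑d)^[l] (Q.coeff (m + l))) := by
  refine finsum_eq_sum_of_support_subset _ fun l hl => ?_
  by_contra h
  simp only [coe_range, Set.mem_Iio, not_lt] at h
  exact hl (by simp [hQ (m + l) (by omega), iterate_map_zero])

theorem adj_coeff_eq_zero_of_lt (Q : PDO R) {NQ : ℤ} (hQ : ∀ n, NQ < n → Q.coeff n = 0)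
    {m : ℤ} (hm : NQ < m) : (adj d Q).coeff m = 0 := by
  simp [adj_coeff_eq_sum d Q hQ m (L := 0) (by omega)]

theorem mul_Dpow_one_coeff (P : PDO R) (n : ℤ) :
    (mul d P (Dpow 1)).coeff n = P.coeff (n - 1) := by
  have hconst : ∀ m, d ((Dpow 1 : PDO R).coeff m) = 0 := fun m => by
    simp only [Dpow]; split_ifs <;> simp
  refine (finsum_eq_single _ (n - 1, 0) fun ⟨i, j⟩ hij => ?_).trans ?_
  · rcases j with _ | j
    · have : n - i ≠ 1 := fun h => hij (by simp; omega)
      simp [Dpow, this]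
    · simp [Function.iterate_succ_apply, hconst, iterate_map_zero]
  · simp [Dpow, zchoose_eq_choose]

theorem sum_mul_zchoose_smul_iterate_adj_coeff (a : R) (Q : PDO R) {NQ : ℤ}
    (hQ : ∀ n, NQ < n → Q.coeff n = 0) (i : ℤ) {L : ℕ} (hL : NQ + 1 + i < L) :
    ∑ j ∈ range L, a * (zchoose i j • (⇑d)^[j] ((adj d Q).coeff (-1 - i + j))) =
      (((-1 : ℤˣ) ^ (-1 - i) : ℤˣ) : ℤ) • (a * Q.coeff (-1 - i)) := by
  set ε : ℤ → ℤ := fun m => (((-1 : ℤˣ) ^ m : ℤˣ) : ℤ)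
  set f : ℕ → ℕ → R := fun j l => a * (zchoose i j • (⇑d)^[j] (ε (-1 - i + j + l) •
    (zchoose (-1 - i + j + l) l • (⇑d)^[l] (Q.coeff (-1 - i + j + l)))))
  have expand : ∀ j ∈ range L, a * (zchoose i j • (⇑d)^[j] ((adj d Q).coeff (-1 - i + j))) =
      ∑ l ∈ range (L - j), f j l := fun j hj => by
    have hj : j < L := mem_range.mp hj
    rw [adj_coeff_eq_sum d Q hQ _ (L := L - j) (by omega), iterate_derivation_sum, smul_sum,
      mul_sum]
  have collapse : ∀ s : ℕ, ∑ j ∈ range (s + 1), f j (s - j) =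
      (if s = 0 then 1 else 0 : ℤ) • (ε (s - 1 - i) • (a * (⇑d)^[s] (Q.coeff (s - 1 - i)))) := by
    intro s
    rw [← sum_range_choose_mul_choose_sub_one i s, sum_smul]
    refine sum_congr rfl fun j hj => ?_
    have hjs : j + (s - j) = s := by have := mem_range.mp hj; omega
    have hcast : -1 - i + j + ((s - j : ℕ) : ℤ) = s - 1 - i := by omega
    simp only [f, hcast, iterate_derivation_zsmul]
    rw [← Function.iterate_add_apply, hjs]
    simp only [zchoose_eq_choose, zsmul_eq_mul]
    push_cast
    ring
  rw [sum_congr rfl expand, ← sum_range_diag_flip, sum_congr rfl fun s _ => collapse s]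
  rcases Nat.eq_zero_or_pos L with rfl | hL0
  · simp [hQ (-1 - i) (by omega)]
  · simp [hL0, ε, sub_eq_add_neg, add_comm]

theorem mul_adj_coeff_neg_one (P Q : PDO R) :
    (mul d P (adj d Q)).coeff (-1) =
      ∑ᶠ t : ℤ, (((-1 : ℤˣ) ^ t : ℤˣ) : ℤ) • (P.coeff (-1 - t) * Q.coeff t) := by
  obtain ⟨NP, hP⟩ := P.bdd
  obtain ⟨NQ, hQ⟩ := Q.bdd
  rw [mul_coeff_eq_sum d P (adj d Q) hP (fun _ => adj_coeff_eq_zero_of_lt d Q hQ) (-1)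
      (L := (NP + NQ + 2).toNat) (by omega),
    sum_congr rfl fun i hi => sum_mul_zchoose_smul_iterate_adj_coeff d _ Q hQ i
      (by have := (mem_Icc.mp hi).2; omega),
    ← finsum_comp_equiv (Equiv.subLeft (-1))]
  simp only [Equiv.subLeft_apply, sub_sub_cancel]
  refine (finsum_eq_sum_of_support_subset _ fun i hi => ?_).symm
  have hiP : i ≤ NP := by
    by_contra! h
    exact hi (by simp [hP i h])
  have hiQ : -1 - i ≤ NQ := by
    by_contra! h
    exact hi (by simp [hQ _ h])
  simp only [coe_Icc, Set.mem_Icc]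
  omega

theorem adj_coeff_of_coeff_eq_derivation_add_shift (P Q : PDO R)
    (hQP : ∀ m, Q.coeff m = d (P.coeff m) + P.coeff (m - 1)) (n : ℤ) :
    (adj d Q).coeff n = -(adj d P).coeff (n - 1) := by
  obtain ⟨N, hP⟩ := P.bdd
  have hQ : ∀ m, N + 1 < m → Q.coeff m = 0 := fun m hm => by
    simp [hQP, hP m (by omega), hP (m - 1) (by omega)]
  set L := (N - n + 2).toNat
  set ε : ℤ → ℤ := fun m => (((-1 : ℤˣ) ^ m : ℤˣ) : ℤ)
  have hε : ∀ m, ε (m + 1) = -ε m := fun m => by simp [ε, zpow_add_one]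
  set u : ℕ → R := fun j =>
    ε (n + j) • (Ring.choose (n + j) j • (⇑d)^[j + 1] (P.coeff (n + j)))
  set g : ℕ → R := fun j =>
    ε (n + j) • (Ring.choose (n + j) j • (⇑d)^[j] (Q.coeff (n + j))) +
      ε (n - 1 + j) • (Ring.choose (n - 1 + j) j • (⇑d)^[j] (P.coeff (n - 1 + j)))
  have hg0 : g 0 = u 0 := by
    have := hε (n - 1)
    simp only [sub_add_cancel] at this
    simp [g, u, hQP, this]
  -- Pascal's rule turns the sum of `g` into a telescoping sum of `u`.
  have hg : ∀ j, g (j + 1) = u (j + 1) - u j := fun j => by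
    have hpascal := Ring.choose_succ_succ (n + j) j
    simp only [g, u, hQP, Nat.cast_succ, iterate_map_add, ← Function.iterate_succ_apply]
    rw [show n - 1 + (j + 1) = n + j by ring, show n + (j + 1) = n + j + 1 by ring,
      show n + j + 1 - 1 = n + j by ring, hε, hpascal]
    simp only [zsmul_eq_mul]
    push_cast
    ring
  have huL : u L = 0 := by simp [u, hP (n + L) (by omega), iterate_map_zero]
  rw [adj_coeff_eq_sum d Q hQ n (L := L + 1) (by omega),
    adj_coeff_eq_sum d P hP (n - 1) (L := L + 1) (by omega), eq_neg_iff_add_eq_zero,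
    ← sum_add_distrib, zchoose_eq_choose]
  change ∑ j ∈ range (L + 1), g j = 0
  rw [sum_range_succ', sum_congr rfl fun j _ => hg j, sum_range_sub, hg0, huL]
  abel

theorem mul_coeff_of_coeff_eq_smul_shift (P Q Q' : PDO R) (u : ℤˣ) (s : ℤ)
    (hQ' : ∀ t, Q'.coeff t = u • Q.coeff (t - s)) (m : ℤ) :
    (mul d P Q').coeff m = u • (mul d P Q).coeff (m - s) := by
  change ∑ᶠ p : ℤ × ℕ, _ = DistribMulAction.toAddEquiv R u (∑ᶠ p : ℤ × ℕ, _)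
  rw [AddEquiv.map_finsum]
  refine finsum_congr fun ⟨i, j⟩ => ?_
  simp only [DistribMulAction.toAddEquiv_apply, hQ', Units.smul_def, iterate_derivation_zsmul]
  rw [show m - i + j - s = m - s - i + j by ring, smul_comm, mul_smul_comm]

theorem Bseq_succ_coeff (B : PDO R) (k : ℕ) (m : ℤ) :
    (Bseq d B (k + 1)).coeff m = d ((Bseq d B k).coeff m) + (Bseq d B k).coeff (m - 1) :=
  congrArg (d ((Bseq d B k).coeff m) + ·) (mul_Dpow_one_coeff d _ m)

theorem adj_Bseq_coeff (B : PDO R) (k : ℕ) (n : ℤ) :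
    (adj d (Bseq d B k)).coeff n = ((-1 : ℤˣ) ^ k) • (adj d B).coeff (n - k) := by
  induction k generalizing n with
  | zero => simp [Bseq]
  | succ k ih =>
    rw [adj_coeff_of_coeff_eq_derivation_add_shift d _ _ (Bseq_succ_coeff d B k), ih,
      pow_succ, mul_neg_one, Units.neg_smul, Nat.cast_succ, sub_sub, add_comm 1]

end PDO

end ExtendedDToda

open ExtendedDToda ExtendedDToda.PDO in
/-- Both sides are compared coefficientwise as power series in `y - y'`: Taylor expansion at
`y' = y` makes the coefficient of `(y-y')^k` on the left `((-1)^k/k!)·Res_z(A(e^{yz})·B_k(e^{-yz}))`,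
with the `z`-residue written out as a finite sum of products of coefficients. -/
theorem statement3 {R : Type} [CommRing R] [Algebra ℚ R]
    (d : Derivation ℤ R R) (A B : PDO R) :
    ∀ k : ℕ,
      (((-1 : ℚ) ^ k / (k.factorial : ℚ)) •
        (∑ᶠ j : ℤ, (((-1 : ℤˣ) ^ j : ℤˣ) : ℤ) •
          (A.coeff (-1 - j) * (Bseq d B k).coeff j)))
      = ((k.factorial : ℚ)⁻¹) •
          (mul d (mul d A (adj d B)) (Dpow 1)).coeff (-(k : ℤ)) := by
  intro k
  rw [← mul_adj_coeff_neg_one, mul_Dpow_one_coeff,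
    mul_coeff_of_coeff_eq_smul_shift d A (adj d B) _ _ k (adj_Bseq_coeff d B k),
    show (-1 : ℤ) - k = -k - 1 by ring, Units.smul_def, ← Int.cast_smul_eq_zsmul ℚ, smul_smul]
  congr 1
  push_cast
  rw [div_mul_eq_mul_div, ← mul_pow]
  norm_num
end

section
/- Let R be a commutative differential ring in which 2 is invertible, and let A = 1 + a_1∂^{-1} + a_2∂^{-2} + ⋯ be a pseudodifferential operator of order 0 with leading coefficient 1. Then there exists a unique pseudodifferential operator B = 1 + b_1∂^{-1} + b_2∂^{-2} + ⋯ with B² = A. Moreover, if all coefficients a_i with odd index i vanish and every a_i is annihilated by ∂, then all odd-index b_j vanish and every b_j is annihilated by ∂. -/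
/-
Write `B = Σ_{n ≤ 0} b_n ∂^n` with `b_0 = 1`. For `n < 0` the coefficient of `∂^n` in `B²` is
`2 b_n + L_n(b)`, where `L_n(b)` only involves the `b_m` with `n < m ≤ 0`. Since `2` is a unit, the
equations `2 b_n + L_n(b) = a_n` determine the `b_n` one after the other, by downward induction on
`n`; this gives both existence and uniqueness. If every `b_m` with `m > n` is a `∂`-constant, the
terms of `L_n(b)` carrying derivatives vanish and `L_n(b) = Σ_{n < i < 0} b_i b_{n-i}`. The same
downward induction then shows that the `b_n` are `∂`-constants when the `a_n` are, and that
`b_n = 0` for odd `n` when `a_n = 0` for odd `n`, because one of `i`, `n - i` is odd.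
-/

namespace ExtendedDToda

open Finset

theorem forall_of_induction_down {P : ℤ → Prop} (N : ℤ) (htop : ∀ n, N ≤ n → P n)
    (hstep : ∀ n < N, (∀ m, n < m → P m) → P n) (n : ℤ) : P n := by
  suffices h : ∀ k : ℕ, ∀ n, N - k ≤ n → P n from h (N - n).toNat n (by omega)
  intro k
  induction k with
  | zero => simpa using htop
  | succ k ih =>
    intro n hn
    rcases lt_or_ge n (N - k) with hlt | hge
    · exact hstep n (by omega) fun m hm => ih m (by omega)
    · exact ih n hge

theorem zchoose_zero_right (n : ℤ) : zchoose n 0 = 1 := by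
  unfold zchoose; split <;> simp

theorem zchoose_zero_left {j : ℕ} (hj : j ≠ 0) : zchoose 0 j = 0 := by
  simp [zchoose, Nat.choose_eq_zero_of_lt (Nat.pos_of_ne_zero hj)]

namespace PDO

variable {R : Type} [CommRing R]

theorem ext {P Q : PDO R} (h : ∀ n, P.coeff n = Q.coeff n) : P = Q := by
  cases P; cases Q; congr; funext n; exact h n

section Square

variable (d : Derivation ℤ R R)

noncomputable def mulTerm (f g : ℤ → R) (n : ℤ) (p : ℤ × ℕ) : R :=
  f p.1 * (zchoose p.1 p.2 • (⇑d)^[p.2] (g (n - p.1 + p.2)))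

/-- `L_n(b)`: when `b_0 = 1` and `b_m = 0` for `m > 0`, the coefficient of `∂^n` in `B²`
minus `2 b_n`. -/
noncomputable def sqLower (c : ℤ → R) (n : ℤ) : R :=
  ∑ p ∈ Ioo n 0 ×ˢ range ((-n).toNat + 1), mulTerm d c c n p

theorem iterate_derivation_zero (j : ℕ) : (⇑d)^[j] (0 : R) = 0 :=
  Function.iterate_fixed (map_zero d) j

theorem coeff_mul_eq_sum {P Q : PDO R} (hP : ∀ m, 0 < m → P.coeff m = 0)
    (hQ : ∀ m, 0 < m → Q.coeff m = 0) (n : ℤ) :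
    (mul d P Q).coeff n =
      ∑ p ∈ Icc n 0 ×ˢ range ((-n).toNat + 1), mulTerm d P.coeff Q.coeff n p := by
  change ∑ᶠ p, mulTerm d P.coeff Q.coeff n p = _
  refine finsum_eq_finsetSum_of_support_subset _ fun p hp => ?_
  simp only [coe_product, Set.mem_prod, mem_coe, mem_Icc, mem_range]
  by_contra hout
  apply hp
  by_cases h1 : 0 < p.1
  · rw [mulTerm, hP _ h1, zero_mul]
  · rw [mulTerm, hQ (n - p.1 + p.2) (by omega), iterate_derivation_zero, smul_zero, mul_zero]

theorem coeff_mul_of_pos {P Q : PDO R} (hP : ∀ m, 0 < m → P.coeff m = 0)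
    (hQ : ∀ m, 0 < m → Q.coeff m = 0) {n : ℤ} (hn : 0 < n) : (mul d P Q).coeff n = 0 := by
  rw [coeff_mul_eq_sum d hP hQ, Icc_eq_empty (by omega), empty_product, sum_empty]

theorem coeff_mul_zero {P Q : PDO R} (hP : ∀ m, 0 < m → P.coeff m = 0)
    (hQ : ∀ m, 0 < m → Q.coeff m = 0) : (mul d P Q).coeff 0 = P.coeff 0 * Q.coeff 0 := by
  simp [coeff_mul_eq_sum d hP hQ, mulTerm, zchoose_zero_right]

theorem coeff_mul_self_of_neg {B : PDO R} (hB0 : B.coeff 0 = 1)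
    (hBpos : ∀ m, 0 < m → B.coeff m = 0) {n : ℤ} (hn : n < 0) :
    (mul d B B).coeff n = 2 * B.coeff n + sqLower d B.coeff n := by
  have hIcc : Icc n 0 = insert n (insert 0 (Ioo n 0)) := by
    ext m; simp only [mem_Icc, mem_insert, mem_Ioo]; omega
  have h0 : (0 : ℕ) ∈ range ((-n).toNat + 1) := mem_range.2 (by omega)
  have hfirst :
      ∑ j ∈ range ((-n).toNat + 1), mulTerm d B.coeff B.coeff n (n, j) = B.coeff n := by
    rw [sum_eq_single_of_mem 0 h0 fun j _ hj => ?_]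
    · simp [mulTerm, zchoose_zero_right, hB0]
    · rw [mulTerm, sub_self, zero_add, hBpos j (by omega), iterate_derivation_zero, smul_zero,
        mul_zero]
  have hlast :
      ∑ j ∈ range ((-n).toNat + 1), mulTerm d B.coeff B.coeff n (0, j) = B.coeff n := by
    rw [sum_eq_single_of_mem 0 h0 fun j _ hj => by simp [mulTerm, zchoose_zero_left hj]]
    simp [mulTerm, zchoose_zero_right, hB0]
  rw [coeff_mul_eq_sum d hBpos hBpos, sum_product, hIcc,
    sum_insert (by simp only [mem_insert, mem_Ioo]; omega), sum_insert (by simp), hfirst, hlast,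
    ← sum_product, sqLower]
  ring

theorem sqLower_congr {c c' : ℤ → R} {n : ℤ} (h : ∀ m, n < m → c m = c' m) :
    sqLower d c n = sqLower d c' n := by
  refine sum_congr rfl fun p hp => ?_
  simp only [mem_product, mem_Ioo] at hp
  rw [mulTerm, mulTerm, h _ hp.1.1, h _ (by omega)]

theorem sqLower_eq_sum_of_derivation_eq_zero {c : ℤ → R} {n : ℤ}
    (hc : ∀ m, n < m → d (c m) = 0) : sqLower d c n = ∑ i ∈ Ioo n 0, c i * c (n - i) := by
  rw [sqLower, sum_product]
  refine sum_congr rfl fun i hi => ?_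
  rw [mem_Ioo] at hi
  rw [sum_eq_single_of_mem 0 (mem_range.2 (by omega)) fun j _ hj => ?_]
  · simp [mulTerm, zchoose_zero_right]
  · obtain ⟨j, rfl⟩ := Nat.exists_eq_succ_of_ne_zero hj
    rw [mulTerm, Function.iterate_succ_apply, hc _ (by omega), iterate_derivation_zero,
      smul_zero, mul_zero]

theorem eq_of_mul_self_eq_mul_self [Invertible (2 : R)] {B B' : PDO R} (hB0 : B.coeff 0 = 1)
    (hBpos : ∀ m, 0 < m → B.coeff m = 0) (hB'0 : B'.coeff 0 = 1)
    (hB'pos : ∀ m, 0 < m → B'.coeff m = 0) (h : mul d B B = mul d B' B') : B = B' := by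
  refine ext <| forall_of_induction_down 0 (fun n hn => ?_) fun n hn ih => ?_
  · rcases hn.lt_or_eq with hn | rfl
    · rw [hBpos n hn, hB'pos n hn]
    · rw [hB0, hB'0]
  · have hcoeff := congrArg (coeff · n) h
    simp only [coeff_mul_self_of_neg d hB0 hBpos hn, coeff_mul_self_of_neg d hB'0 hB'pos hn,
      sqLower_congr d ih] at hcoeff
    exact (isUnit_of_invertible (2 : R)).mul_left_cancel (add_right_cancel hcoeff)

theorem derivation_coeff_eq_zero_of_mul_self [Invertible (2 : R)] {B : PDO R}
    (hB0 : B.coeff 0 = 1) (hBpos : ∀ m, 0 < m → B.coeff m = 0)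
    (h : ∀ n, d ((mul d B B).coeff n) = 0) : ∀ n, d (B.coeff n) = 0 := by
  refine forall_of_induction_down 0 (fun n hn => ?_) fun n hn ih => ?_
  · rcases hn.lt_or_eq with hn | rfl
    · rw [hBpos n hn, map_zero]
    · rw [hB0, Derivation.map_one_eq_zero]
  · have hsum : d (sqLower d B.coeff n) = 0 := by
      rw [sqLower_eq_sum_of_derivation_eq_zero d ih, map_sum]
      refine sum_eq_zero fun i hi => ?_
      rw [mem_Ioo] at hi
      rw [Derivation.leibniz, ih i hi.1, ih (n - i) (by omega), smul_zero, smul_zero, add_zero]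
    have hn' := h n
    rw [coeff_mul_self_of_neg d hB0 hBpos hn, map_add, hsum, add_zero, two_mul, map_add,
      ← two_mul] at hn'
    exact (isUnit_of_invertible (2 : R)).mul_right_eq_zero.mp hn'

theorem coeff_eq_zero_of_odd_of_mul_self [Invertible (2 : R)] {B : PDO R}
    (hB0 : B.coeff 0 = 1) (hBpos : ∀ m, 0 < m → B.coeff m = 0)
    (hd : ∀ n, d (B.coeff n) = 0) (h : ∀ n, Odd n → (mul d B B).coeff n = 0) :
    ∀ n, Odd n → B.coeff n = 0 := by
  refine forall_of_induction_down 0 (fun n hn hodd => ?_) fun n hn ih hodd => ?_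
  · rcases hn.lt_or_eq with hn | rfl
    · exact hBpos n hn
    · exact absurd hodd (by decide)
  · have hsum : sqLower d B.coeff n = 0 := by
      rw [sqLower_eq_sum_of_derivation_eq_zero d fun m _ => hd m]
      refine sum_eq_zero fun i hi => ?_
      rw [mem_Ioo] at hi
      rcases Int.even_or_odd i with heven | hodd_i
      · rw [ih (n - i) (by omega) (hodd.sub_even heven), mul_zero]
      · rw [ih i hi.1 hodd_i, zero_mul]
    have hn' := h n hodd
    rw [coeff_mul_self_of_neg d hB0 hBpos hn, hsum, add_zero] at hn'
    exact (isUnit_of_invertible (2 : R)).mul_right_eq_zero.mp hn'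

variable [Invertible (2 : R)] (A : PDO R)

-- The truncation to `m > n` only serves the termination proof; see `sqLower_congr`.
noncomputable def sqrtCoeff (n : ℤ) : R :=
  if hn : n < 0 then
    ⅟2 * (A.coeff n - sqLower d (fun m => if n < m then sqrtCoeff m else 0) n)
  else if n = 0 then 1 else 0
termination_by (-n).toNat
decreasing_by omega

theorem sqrtCoeff_of_pos {n : ℤ} (hn : 0 < n) : sqrtCoeff d A n = 0 := by
  rw [sqrtCoeff, dif_neg (by omega), if_neg (by omega)]

theorem sqrtCoeff_zero : sqrtCoeff d A 0 = 1 := by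
  rw [sqrtCoeff, dif_neg (by omega), if_pos rfl]

theorem two_mul_sqrtCoeff_add_sqLower {n : ℤ} (hn : n < 0) :
    2 * sqrtCoeff d A n + sqLower d (sqrtCoeff d A) n = A.coeff n := by
  rw [sqrtCoeff, dif_pos hn, sqLower_congr d (c' := sqrtCoeff d A) fun m hm => if_pos hm,
    mul_invOf_cancel_left, sub_add_cancel]

noncomputable def sqrt : PDO R := ⟨sqrtCoeff d A, 0, fun _ hn => sqrtCoeff_of_pos d A hn⟩

theorem mul_sqrt_self (hA0 : A.coeff 0 = 1) (hAtop : ∀ n, 0 < n → A.coeff n = 0) :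
    mul d (sqrt d A) (sqrt d A) = A := by
  have hpos : ∀ n, 0 < n → (sqrt d A).coeff n = 0 := fun _ hn => sqrtCoeff_of_pos d A hn
  refine ext fun n => ?_
  rcases lt_trichotomy n 0 with hn | rfl | hn
  · rw [coeff_mul_self_of_neg d (sqrtCoeff_zero d A) hpos hn]
    exact two_mul_sqrtCoeff_add_sqLower d A hn
  · rw [coeff_mul_zero d hpos hpos]
    simp [sqrt, sqrtCoeff_zero, hA0]
  · rw [coeff_mul_of_pos d hpos hpos hn, hAtop n hn]

end Square

end PDO

end ExtendedDToda

open ExtendedDToda ExtendedDToda.PDO in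
/-- every pseudodifferential operator
`A = 1 + a_1∂^{-1} + a_2∂^{-2} + ⋯` of order 0 with leading coefficient 1 has
a unique square root `B = 1 + b_1∂^{-1} + ⋯` of the same shape (2 invertible
in `R`); moreover if all odd-index coefficients of `A` vanish and every
coefficient of `A` is annihilated by `∂`, then the same holds for `B`. -/
theorem statement10 {R : Type} [CommRing R] [Invertible (2 : R)]
    (d : Derivation ℤ R R) (A : PDO R)
    (hA0 : A.coeff 0 = 1) (hAtop : ∀ n : ℤ, 0 < n → A.coeff n = 0) :
    (∃! B : PDO R, B.coeff 0 = 1 ∧ (∀ n : ℤ, 0 < n → B.coeff n = 0) ∧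
        mul d B B = A) ∧
    (∀ B : PDO R, B.coeff 0 = 1 → (∀ n : ℤ, 0 < n → B.coeff n = 0) →
        mul d B B = A →
        (∀ n : ℤ, Odd n → A.coeff n = 0) → (∀ n : ℤ, d (A.coeff n) = 0) →
        (∀ n : ℤ, Odd n → B.coeff n = 0) ∧ (∀ n : ℤ, d (B.coeff n) = 0)) := by
  have hsqrt0 : (sqrt d A).coeff 0 = 1 := sqrtCoeff_zero d A
  have hsqrtpos : ∀ n : ℤ, 0 < n → (sqrt d A).coeff n = 0 :=
    fun _ hn => sqrtCoeff_of_pos d A hn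
  have hmul : mul d (sqrt d A) (sqrt d A) = A := mul_sqrt_self d A hA0 hAtop
  refine ⟨⟨sqrt d A, ⟨hsqrt0, hsqrtpos, hmul⟩, fun B ⟨hB0, hBpos, hBB⟩ =>
    eq_of_mul_self_eq_mul_self d hB0 hBpos hsqrt0 hsqrtpos (hBB.trans hmul.symm)⟩, ?_⟩
  rintro B hB0 hBpos rfl hAodd hAd
  have hBd := derivation_coeff_eq_zero_of_mul_self d hB0 hBpos hAd
  exact ⟨coeff_eq_zero_of_odd_of_mul_self d hB0 hBpos hBd hAodd, hBd⟩
end
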